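/- Let σ, σ' be configurations of a threshold automaton. (1) If τ is a steady schedule applicable to σ with τ(σ) = σ', then the assignment sending each rule r to the number τ(r) of occurrences of r in τ witnesses steady reachability from σ to σ'. (2) Conversely, if the assignment {y_r}_{r∈R} witnesses steady reachability from σ to σ', then there exists a steady schedule τ applicable to σ with τ(σ) = σ' in which every rule r occurs exactly y_r times. -/

import Mathlib

/-!
Threshold automata (Konnov, Veith, Widder), following
"Complexity of Verification and Synthesis of Threshold Automata".
-/

/-- A threshold guard `x ⋈ a₀ + a₁·p₁ + … + a_{|Π|}·p_{|Π|}` over shared variables `V` and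
parameters `P`.  `isRise = true` means a *rise* guard `x ≥ …`, and `isRise = false` means a
*fall* guard `x < …`. -/
structure TGuard (V P : Type) where
  var : V
  isRise : Bool
  a0 : ℚ
  coef : P → ℚ

/-- A configuration `σ = (κ, g, p)`: numbers of processes in each location, values of the
shared variables, and values of the parameters. -/
structure Config (L V P : Type) where
  κ : L → ℕ
  g : V → ℕ
  p : P → ℕ

/-- A rule of a threshold automaton: source and target locations, a guard that is a
(finite) conjunction of threshold guards, and an update `V → {0,1}`. -/
structure TRule (L V P : Type) where
  src : L
  dst : L
  guard : List (TGuard V P)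
  upd : V → ℕ
  upd_le_one : ∀ v, upd v ≤ 1

/-- A threshold automaton `(L, I, Γ, R)` together with its environment `(Π, RC, N)`.
`L`, `V`, `P` are the types of locations, shared variables and parameters, and `R` is the
index type of rules. -/
structure TA (L V P R : Type) where
  initial : Set L
  initial_nonempty : initial.Nonempty
  rc : Set (P → ℕ)
  N : (P → ℕ) → ℕ
  rule : R → TRule L V P

variable {L V P R : Type}

/-- Satisfaction of a threshold guard by values `g` of the shared variables and `p` of the
parameters. -/
def TGuard.holds [Fintype P] (φ : TGuard V P) (g : V → ℕ) (p : P → ℕ) : Prop :=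
  if φ.isRise then φ.a0 + ∑ i : P, φ.coef i * (p i : ℚ) ≤ (g φ.var : ℚ)
  else (g φ.var : ℚ) < φ.a0 + ∑ i : P, φ.coef i * (p i : ℚ)

/-- A configuration enables a rule. -/
def TRule.enabledAt [Fintype P] (r : TRule L V P) (σ : Config L V P) : Prop :=
  0 < σ.κ r.src ∧ ∀ φ ∈ r.guard, φ.holds σ.g σ.p

/-- The result of firing a rule at a configuration. -/
def TRule.fire [DecidableEq L] (r : TRule L V P) (σ : Config L V P) : Config L V P where
  κ := fun ℓ => σ.κ ℓ + (if ℓ = r.dst then 1 else 0) - (if ℓ = r.src then 1 else 0)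
  g := fun v => σ.g v + r.upd v
  p := σ.p

namespace TA

variable [Fintype P] [DecidableEq L]

/-- `σ` is a configuration of `ta`: the parameters satisfy the resilience condition and the
total number of processes is `N(p)`. -/
def validConfig [Fintype L] (ta : TA L V P R) (σ : Config L V P) : Prop :=
  σ.p ∈ ta.rc ∧ ∑ ℓ : L, σ.κ ℓ = ta.N σ.p

/-- Initial configurations. -/
def isInitial [Fintype L] (ta : TA L V P R) (σ : Config L V P) : Prop :=
  ta.validConfig σ ∧ (∀ ℓ, ℓ ∉ ta.initial → σ.κ ℓ = 0) ∧ ∀ v, σ.g v = 0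

/-- A schedule (finite sequence of rules) is applicable to a configuration. -/
def applicable (ta : TA L V P R) : Config L V P → List R → Prop
  | _, [] => True
  | σ, r :: τ => (ta.rule r).enabledAt σ ∧ ta.applicable ((ta.rule r).fire σ) τ

/-- The configuration `τ(σ)` resulting from applying a schedule. -/
def apply (ta : TA L V P R) : Config L V P → List R → Config L V P
  | σ, [] => σ
  | σ, r :: τ => ta.apply ((ta.rule r).fire σ) τ

/-- The configurations visited by the path from `σ` along `τ` (including both endpoints). -/
def visited (ta : TA L V P R) : Config L V P → List R → List (Config L V P)
  | σ, [] => [σ]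
  | σ, r :: τ => σ :: ta.visited ((ta.rule r).fire σ) τ

/-- Reachability `σ →* σ'`. -/
def reaches (ta : TA L V P R) (σ σ' : Config L V P) : Prop :=
  ∃ τ : List R, ta.applicable σ τ ∧ ta.apply σ τ = σ'

/-- The set of all threshold guards occurring in rules of the automaton. -/
def guards (ta : TA L V P R) : Set (TGuard V P) :=
  {φ | ∃ r : R, φ ∈ (ta.rule r).guard}

/-- The context `ω(σ)`: rise guards of `ta` that are true in `σ` together with fall guards
of `ta` that are false in `σ`. -/
def context (ta : TA L V P R) (σ : Config L V P) : Set (TGuard V P) :=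
  {φ | φ ∈ ta.guards ∧ if φ.isRise then φ.holds σ.g σ.p else ¬ φ.holds σ.g σ.p}

/-- A schedule applicable at `σ` is steady if all configurations visited by the
corresponding path have the same context. -/
def steady (ta : TA L V P R) (σ : Config L V P) (τ : List R) : Prop :=
  ∀ σ' ∈ ta.visited σ τ, ta.context σ' = ta.context σ

end TA

/-- There is a chain of rules, all fired at least once according to `y`, starting at a
location populated in `σ` and leading to the rule `r`. -/
def TA.chainTo [Fintype P] (ta : TA L V P R) (y : R → ℕ) (σ : Config L V P) (r : R) : Prop :=
  ∃ (c : List R) (hne : c ≠ []),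
    (∀ r' ∈ c, 0 < y r') ∧
    0 < σ.κ (ta.rule (c.head hne)).src ∧
    List.Chain' (fun a b => (ta.rule a).dst = (ta.rule b).src) c ∧
    c.getLast hne = r

/-- The assignment `y : R → ℕ` witnesses steady reachability from `σ` to `σ'`. -/
def TA.witnessesSteady [Fintype P] [DecidableEq L] [Fintype R]
    (ta : TA L V P R) (σ σ' : Config L V P) (y : R → ℕ) : Prop :=
  σ.p = σ'.p ∧
  ta.context σ = ta.context σ' ∧
  (∀ ℓ : L, (σ'.κ ℓ : ℤ) - (σ.κ ℓ : ℤ) =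
      (∑ r : R, if (ta.rule r).dst = ℓ then (y r : ℤ) else 0) -
      (∑ r : R, if (ta.rule r).src = ℓ then (y r : ℤ) else 0)) ∧
  (∀ z : V, (σ'.g z : ℤ) - (σ.g z : ℤ) = ∑ r : R, (y r : ℤ) * ((ta.rule r).upd z : ℤ)) ∧
  (∀ r : R, 0 < y r → ∀ φ ∈ (ta.rule r).guard, φ.holds σ.g σ.p) ∧
  (∀ r : R, 0 < y r → ta.chainTo y σ r)

/-!
Firing a rule changes the counters and the shared variables by exactly that rule's effect, which
gives the linear equations of a witness in both directions. In a steady schedule every fired rule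
is enabled in a configuration with the context of `σ`, hence already at `σ`, and following the
token it moves backwards yields the required chain.

Conversely, fire one rule `e` of the budget `y` at a time, keeping the remaining budget a
witness. Shared variables only grow, so the new configuration is squeezed between `σ` and `σ'`
and has their context. The only delicate point is that the chains of the remaining budget must
survive: `e` leaves an occupied location `u`, and if some budgeted rule leaving `u` lies on a
cycle back to `u`, that rule is fired instead.
-/

def Config.occupied (σ : Config L V P) : Set L := {ℓ | 0 < σ.κ ℓ}

namespace TRule

variable [DecidableEq L] (r : TRule L V P) (σ : Config L V P)

theorem fire_κ_cast (h : 0 < σ.κ r.src) (ℓ : L) :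
    ((r.fire σ).κ ℓ : ℤ) =
      σ.κ ℓ + (if r.dst = ℓ then 1 else 0) - (if r.src = ℓ then 1 else 0) := by
  simp only [fire, eq_comm (b := ℓ)]
  split_ifs <;> subst_vars <;> omega

theorem occupied_fire_subset : (r.fire σ).occupied ⊆ insert r.dst σ.occupied := by
  intro ℓ hℓ
  by_cases hd : ℓ = r.dst
  · exact Or.inl hd
  · simp only [Config.occupied, fire, hd, Set.mem_ofPred_eq, if_false] at hℓ
    exact Or.inr (by simp only [Config.occupied, Set.mem_ofPred_eq]; omega)

theorem dst_mem_occupied_fire (h : r.src ∈ σ.occupied) : r.dst ∈ (r.fire σ).occupied := by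
  simp only [Config.occupied, fire, Set.mem_ofPred_eq] at h ⊢
  rcases eq_or_ne r.dst r.src with h' | h'
  · simpa [h'] using h
  · simp [h']

theorem diff_occupied_subset : σ.occupied \ {r.src} ⊆ (r.fire σ).occupied := by
  rintro ℓ ⟨hℓ, hne⟩
  simp only [Config.occupied, fire, Set.mem_ofPred_eq, Set.mem_singleton_iff] at hℓ hne ⊢
  split_ifs <;> omega

end TRule

namespace TGuard

variable [Fintype P]

/-- A rise guard that holds and a fall guard that fails both stay so when the shared variables
grow: membership in a context is upward closed. -/
theorem contextual_mono (φ : TGuard V P) {g g' : V → ℕ} (p : P → ℕ) (hg : g ≤ g')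
    (h : if φ.isRise then φ.holds g p else ¬ φ.holds g p) :
    if φ.isRise then φ.holds g' p else ¬ φ.holds g' p := by
  have hφ : (g φ.var : ℚ) ≤ g' φ.var := by exact_mod_cast hg φ.var
  cases hrise : φ.isRise <;> simp only [hrise, holds, if_true, if_false, Bool.false_eq_true,
    not_lt] at h ⊢ <;> linarith

end TGuard

namespace TA

variable [Fintype P] (ta : TA L V P R)

theorem context_subset_of_le {σ σ' : Config L V P} (hp : σ.p = σ'.p) (hg : σ.g ≤ σ'.g) :
    ta.context σ ⊆ ta.context σ' := fun φ ⟨hφ, h⟩ =>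
  ⟨hφ, hp ▸ φ.contextual_mono σ.p hg h⟩

theorem holds_iff_of_context_eq {σ σ' : Config L V P} (h : ta.context σ = ta.context σ')
    {φ : TGuard V P} (hφ : φ ∈ ta.guards) : φ.holds σ.g σ.p ↔ φ.holds σ'.g σ'.p := by
  have hmem := Set.ext_iff.mp h φ
  simp only [context, Set.mem_ofPred_eq, hφ, true_and] at hmem
  cases hrise : φ.isRise <;> simp only [hrise, if_true, if_false, Bool.false_eq_true] at hmem
  exacts [not_iff_not.mp hmem, hmem]

end TA

theorem Finset.sum_ite_add_single [Fintype R] [DecidableEq R] (p : R → Prop)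
    [DecidablePred p] (y : R → ℕ) (e : R) :
    (∑ r : R, if p r then (((y + Pi.single e 1 : R → ℕ) r : ℕ) : ℤ) else 0) =
      (∑ r : R, if p r then (y r : ℤ) else 0) + if p e then 1 else 0 := by
  simp only [Pi.add_apply, Nat.cast_add, ite_add_zero, Finset.sum_add_distrib, add_right_inj]
  rw [Finset.sum_eq_single e (fun r _ hr => by simp [hr]) (by simp)]
  simp

theorem List.count_cons_eq_add_single [DecidableEq R] (e : R) (τ : List R) :
    (fun r => (e :: τ).count r) = (fun r => τ.count r) + Pi.single e 1 := by
  funext r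
  by_cases h : e = r
  · simp [h]
  · simp [h, Ne.symm h]

section Budget

variable [DecidableEq R] {y : R → ℕ} {e r : R}

theorem pos_of_pos_sub_single (h : 0 < (y - Pi.single e 1 : R → ℕ) r) : 0 < y r :=
  h.trans_le tsub_le_self

theorem pos_sub_single_of_ne (h : 0 < y r) (hne : r ≠ e) : 0 < (y - Pi.single e 1 : R → ℕ) r := by
  simpa [hne] using h

theorem sub_single_add_single (h : 0 < y e) : y - Pi.single e 1 + Pi.single e 1 = y := by
  funext r
  by_cases hr : r = e
  · subst hr
    simp only [Pi.add_apply, Pi.sub_apply, Pi.single_eq_same]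
    omega
  · simp [hr]

end Budget

namespace TA

section Schedule

variable [DecidableEq L] (ta : TA L V P R)

theorem apply_p : ∀ (σ : Config L V P) (τ : List R), (ta.apply σ τ).p = σ.p
  | _, [] => rfl
  | σ, r :: τ => apply_p ((ta.rule r).fire σ) τ

theorem apply_mem_visited : ∀ (σ : Config L V P) (τ : List R), ta.apply σ τ ∈ ta.visited σ τ
  | _, [] => List.mem_singleton_self _
  | σ, r :: τ => List.mem_cons_of_mem _ (apply_mem_visited ((ta.rule r).fire σ) τ)

variable [Fintype P]

theorem exists_mem_visited_enabledAt {r : R} :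
    ∀ {σ : Config L V P} {τ : List R}, ta.applicable σ τ → r ∈ τ →
      ∃ σ'' ∈ ta.visited σ τ, (ta.rule r).enabledAt σ''
  | _, [], _, hr => absurd hr List.not_mem_nil
  | σ, e :: τ, ⟨hen, happ⟩, hr => by
    rcases List.mem_cons.mp hr with rfl | hr
    · exact ⟨σ, List.mem_cons_self, hen⟩
    · obtain ⟨σ'', hmem, h⟩ := exists_mem_visited_enabledAt happ hr
      exact ⟨σ'', List.mem_cons_of_mem _ hmem, h⟩

theorem steady_cons {σ : Config L V P} {e : R} {τ : List R}
    (he : ta.context ((ta.rule e).fire σ) = ta.context σ)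
    (hτ : ta.steady ((ta.rule e).fire σ) τ) : ta.steady σ (e :: τ) := by
  intro σ'' hmem
  rcases List.mem_cons.mp hmem with rfl | hmem
  · rfl
  · rw [hτ σ'' hmem, he]

end Schedule
section Flow

variable [Fintype R] (ta : TA L V P R)

def increment (y : R → ℕ) (z : V) : ℤ := ∑ r : R, (y r : ℤ) * ((ta.rule r).upd z : ℤ)

theorem increment_nonneg (y : R → ℕ) (z : V) : 0 ≤ ta.increment y z :=
  Finset.sum_nonneg fun _ _ => by positivity

theorem increment_add_single [DecidableEq R] (y : R → ℕ) (e : R) (z : V) :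
    ta.increment (y + Pi.single e 1) z = ta.increment y z + (ta.rule e).upd z := by
  simp [increment, Pi.single_apply, add_mul, Finset.sum_add_distrib]

theorem fire_increment_iff [DecidableEq R] [DecidableEq L] (σ σ' : Config L V P)
    (y : R → ℕ) (e : R) (z : V) :
    (σ'.g z : ℤ) - ((ta.rule e).fire σ).g z = ta.increment y z ↔
      (σ'.g z : ℤ) - σ.g z = ta.increment (y + Pi.single e 1) z := by
  rw [increment_add_single]
  simp only [TRule.fire, Nat.cast_add]
  constructor <;> intro h <;> linarith

variable [DecidableEq L]

def inflow (y : R → ℕ) (ℓ : L) : ℤ := ∑ r : R, if (ta.rule r).dst = ℓ then (y r : ℤ) else 0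

def outflow (y : R → ℕ) (ℓ : L) : ℤ := ∑ r : R, if (ta.rule r).src = ℓ then (y r : ℤ) else 0

theorem exists_pos_of_inflow_pos {y : R → ℕ} {ℓ : L} (h : 0 < ta.inflow y ℓ) :
    ∃ r, 0 < y r ∧ (ta.rule r).dst = ℓ := by
  obtain ⟨r, -, hr⟩ := Finset.exists_ne_zero_of_sum_ne_zero h.ne'
  by_cases hd : (ta.rule r).dst = ℓ
  · exact ⟨r, by simp_all [Nat.pos_iff_ne_zero], hd⟩
  · simp [hd] at hr

theorem le_outflow (y : R → ℕ) {r : R} : (y r : ℤ) ≤ ta.outflow y (ta.rule r).src := by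
  have := Finset.single_le_sum
    (f := fun r' => if (ta.rule r').src = (ta.rule r).src then (y r' : ℤ) else 0)
    (fun r' _ => by split_ifs <;> positivity) (Finset.mem_univ r)
  simpa [outflow] using this

variable [DecidableEq R]

theorem inflow_add_single (y : R → ℕ) (e : R) (ℓ : L) :
    ta.inflow (y + Pi.single e 1) ℓ = ta.inflow y ℓ + if (ta.rule e).dst = ℓ then 1 else 0 :=
  Finset.sum_ite_add_single _ y e

theorem outflow_add_single (y : R → ℕ) (e : R) (ℓ : L) :
    ta.outflow (y + Pi.single e 1) ℓ = ta.outflow y ℓ + if (ta.rule e).src = ℓ then 1 else 0 :=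
  Finset.sum_ite_add_single _ y e

theorem fire_flow_iff {σ : Config L V P} (σ' : Config L V P) (y : R → ℕ) {e : R}
    (he : 0 < σ.κ (ta.rule e).src) (ℓ : L) :
    (σ'.κ ℓ : ℤ) - ((ta.rule e).fire σ).κ ℓ = ta.inflow y ℓ - ta.outflow y ℓ ↔
      (σ'.κ ℓ : ℤ) - σ.κ ℓ =
        ta.inflow (y + Pi.single e 1) ℓ - ta.outflow (y + Pi.single e 1) ℓ := by
  rw [inflow_add_single, outflow_add_single, TRule.fire_κ_cast _ _ he]
  constructor <;> intro h <;> linarith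

variable [Fintype P]

theorem apply_flow : ∀ {σ : Config L V P} {τ : List R}, ta.applicable σ τ →
    ∀ ℓ, ((ta.apply σ τ).κ ℓ : ℤ) - σ.κ ℓ =
      ta.inflow (fun r => τ.count r) ℓ - ta.outflow (fun r => τ.count r) ℓ
  | _, [], _, ℓ => by simp [apply, inflow, outflow]
  | _, e :: τ, ⟨hen, happ⟩, ℓ => by
    rw [List.count_cons_eq_add_single]
    exact (ta.fire_flow_iff _ _ hen.1 ℓ).1 (apply_flow happ ℓ)

theorem apply_increment : ∀ {σ : Config L V P} {τ : List R}, ta.applicable σ τ →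
    ∀ z, ((ta.apply σ τ).g z : ℤ) - σ.g z = ta.increment (fun r => τ.count r) z
  | _, [], _, z => by simp [apply, increment]
  | σ, e :: τ, ⟨_, happ⟩, z => by
    rw [List.count_cons_eq_add_single]
    exact (ta.fire_increment_iff σ _ _ e z).1 (apply_increment happ z)

end Flow

end TA

inductive TA.RuleReachable (ta : TA L V P R) (A : Set R) (S : Set L) : R → Prop
  | base {r : R} : r ∈ A → (ta.rule r).src ∈ S → ta.RuleReachable A S r
  | step {r' r : R} : ta.RuleReachable A S r' → r ∈ A → (ta.rule r').dst = (ta.rule r).src →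
      ta.RuleReachable A S r

namespace TA.RuleReachable

variable {ta : TA L V P R} {A A' : Set R} {S S' : Set L} {r : R}

theorem mem (h : ta.RuleReachable A S r) : r ∈ A := by
  cases h <;> assumption

theorem mono (h : ta.RuleReachable A S r) (hA : A ⊆ A') (hS : S ⊆ S') :
    ta.RuleReachable A' S' r := by
  induction h with
  | base hr hs => exact base (hA hr) (hS hs)
  | step _ hr hd ih => exact step ih (hA hr) hd

theorem exists_src_mem (h : ta.RuleReachable A S r) : ∃ e ∈ A, (ta.rule e).src ∈ S := by
  induction h with
  | base hr hs => exact ⟨_, hr, hs⟩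
  | step _ _ _ ih => exact ih

theorem of_insert_dst {e : R} (h : ta.RuleReachable A (insert (ta.rule e).dst S) r)
    (he : ta.RuleReachable A S e) : ta.RuleReachable A S r := by
  induction h with
  | base hr hs =>
    rcases hs with hs | hs
    · exact step he hr hs.symm
    · exact base hr hs
  | step _ hr hd ih => exact step ih hr hd

/-- Splitting a chain at its last rule leaving `u`. -/
theorem avoid_or_exit (u : L) (h : ta.RuleReachable A S r) :
    ta.RuleReachable {r ∈ A | (ta.rule r).src ≠ u} (S \ {u}) r ∨
      ∃ e ∈ A, (ta.rule e).src = u ∧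
        (r = e ∨ ta.RuleReachable {r ∈ A | (ta.rule r).src ≠ u} {(ta.rule e).dst} r) := by
  induction h with
  | @base r hr hs =>
    by_cases hu : (ta.rule r).src = u
    · exact Or.inr ⟨r, hr, hu, Or.inl rfl⟩
    · exact Or.inl (base ⟨hr, hu⟩ ⟨hs, hu⟩)
  | @step r' r _ hr hd ih =>
    by_cases hu : (ta.rule r).src = u
    · exact Or.inr ⟨r, hr, hu, Or.inl rfl⟩
    rcases ih with ih | ⟨e, he, heu, rfl | ih⟩
    · exact Or.inl (step ih ⟨hr, hu⟩ hd)
    · exact Or.inr ⟨r', he, heu, Or.inr (base ⟨hr, hu⟩ hd.symm)⟩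
    · exact Or.inr ⟨e, he, heu, Or.inr (step ih ⟨hr, hu⟩ hd)⟩

theorem getLast_of_chain {c : List R} (hne : c ≠ []) (hA : ∀ r ∈ c, r ∈ A)
    (hc : c.IsChain fun a b => (ta.rule a).dst = (ta.rule b).src)
    (hhead : ta.RuleReachable A S (c.head hne)) : ta.RuleReachable A S (c.getLast hne) := by
  induction c with
  | nil => exact absurd rfl hne
  | cons a t ih =>
    cases t with
    | nil => exact hhead
    | cons b t =>
      rw [List.getLast_cons (List.cons_ne_nil b t)]
      exact ih (List.cons_ne_nil b t) (fun r hr => hA r (List.mem_cons_of_mem a hr)) hc.tail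
        (step hhead (hA b (by simp)) hc.rel)

end TA.RuleReachable

theorem TA.chainTo_iff [Fintype P] {ta : TA L V P R} {y : R → ℕ} {σ : Config L V P} {r : R} :
    ta.chainTo y σ r ↔ ta.RuleReachable {r | 0 < y r} σ.occupied r := by
  constructor
  · rintro ⟨c, hne, hpos, hhead, hchain, rfl⟩
    exact .getLast_of_chain hne hpos hchain (.base (hpos _ (List.head_mem hne)) hhead)
  · intro h
    induction h with
    | @base r hr hs =>
      exact ⟨[r], List.cons_ne_nil r [], by simpa using hr, hs, List.isChain_singleton r, rfl⟩
    | @step r' r _ hr hd ih =>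
      obtain ⟨c, hne, hpos, hhead, hchain, rfl⟩ := ih
      refine ⟨c ++ [r], by simp, ?_, by rwa [List.head_append_of_ne_nil hne], ?_, by simp⟩
      · simpa [or_imp, forall_and] using ⟨hpos, hr⟩
      · refine hchain.append (List.isChain_singleton r) fun x hx z hz => ?_
        rw [List.getLast?_eq_some_getLast hne, Option.mem_some_iff] at hx
        rw [List.head?_singleton, Option.mem_some_iff] at hz
        rwa [← hx, ← hz]

namespace TA

variable [Fintype P] [DecidableEq L] (ta : TA L V P R)

theorem ruleReachable_of_mem {r : R} : ∀ {σ : Config L V P} {τ : List R},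
    ta.applicable σ τ → r ∈ τ → ta.RuleReachable {r | r ∈ τ} σ.occupied r
  | _, [], _, hr => absurd hr List.not_mem_nil
  | σ, e :: τ, ⟨hen, happ⟩, hr => by
    have he : ta.RuleReachable {r | r ∈ e :: τ} σ.occupied e := .base List.mem_cons_self hen.1
    rcases List.mem_cons.mp hr with rfl | hr
    · exact he
    · refine .of_insert_dst ?_ he
      exact (ruleReachable_of_mem happ hr).mono (fun _ => List.mem_cons_of_mem e)
        ((ta.rule e).occupied_fire_subset σ)

theorem witnessesSteady_count [DecidableEq R] [Fintype R] {σ : Config L V P} {τ : List R}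
    (happ : ta.applicable σ τ) (hst : ta.steady σ τ) :
    ta.witnessesSteady σ (ta.apply σ τ) (fun r => τ.count r) := by
  refine ⟨(ta.apply_p σ τ).symm, (hst _ (ta.apply_mem_visited σ τ)).symm, ta.apply_flow happ,
    ta.apply_increment happ, fun r hr φ hφ => ?_, fun r hr => ?_⟩
  · obtain ⟨σ'', hmem, hen⟩ := ta.exists_mem_visited_enabledAt happ (List.count_pos_iff.mp hr)
    exact (ta.holds_iff_of_context_eq (hst σ'' hmem) ⟨r, hφ⟩).mp (hen.2 φ hφ)
  · exact chainTo_iff.mpr ((ta.ruleReachable_of_mem happ (List.count_pos_iff.mp hr)).mono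
      (fun _ => List.count_pos_iff.mpr) subset_rfl)

end TA

namespace TA

variable [DecidableEq L] {ta : TA L V P R}

theorem RuleReachable.fire {A A' : Set R} {σ : Config L V P} {e : R}
    (hsrc : (ta.rule e).src ∈ σ.occupied) (hA : A ⊆ insert e A')
    (hsame : ∀ f ∈ A', (ta.rule f).src = (ta.rule e).src →
      ta.RuleReachable A' ((ta.rule e).fire σ).occupied f)
    {f : R} (hf : ta.RuleReachable A σ.occupied f) (hf' : f ∈ A') :
    ta.RuleReachable A' ((ta.rule e).fire σ).occupied f := by
  induction hf with
  | @base f _ hs =>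
    by_cases hfe : (ta.rule f).src = (ta.rule e).src
    · exact hsame f hf' hfe
    · exact .base hf' ((ta.rule e).diff_occupied_subset σ ⟨hs, hfe⟩)
  | @step g f hg _ hd ih =>
    by_cases hg' : g ∈ A'
    · exact .step (ih hg') hf' hd
    · obtain rfl : g = e := (hA hg.mem).resolve_right hg'
      exact .base hf' (hd ▸ (ta.rule g).dst_mem_occupied_fire σ hsrc)

variable [DecidableEq R]

variable (ta) in
/-- After one firing of `e`, the rest of the budget `y` leads from the target of `e` back to
its source. -/
def OnCycle (y : R → ℕ) (e : R) : Prop :=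
  (ta.rule e).dst = (ta.rule e).src ∨
    ∃ g, ta.RuleReachable {r | 0 < (y - Pi.single e 1 : R → ℕ) r} {(ta.rule e).dst} g ∧
      (ta.rule g).dst = (ta.rule e).src

variable {y : R → ℕ} {σ : Config L V P} {e f : R}

theorem ruleReachable_fire_of_onCycle (hcyc : ta.OnCycle y e)
    (hsrc : (ta.rule e).src ∈ σ.occupied) (hf : 0 < (y - Pi.single e 1 : R → ℕ) f)
    (hfe : (ta.rule f).src = (ta.rule e).src) :
    ta.RuleReachable {r | 0 < (y - Pi.single e 1 : R → ℕ) r} ((ta.rule e).fire σ).occupied f := by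
  have hdst := (ta.rule e).dst_mem_occupied_fire σ hsrc
  rcases hcyc with hcyc | ⟨g, hg, hgd⟩
  · exact .base hf (by rwa [hfe, ← hcyc])
  · exact .step (hg.mono subset_rfl (Set.singleton_subset_iff.mpr hdst)) hf (hgd.trans hfe.symm)

/-- If firing `e` empties its source `u` while `f` still has to leave `u`, the flow equation
forces some rule `g` back into `u`. The chain reaching `g` cannot pass through `u`, since that
would put a rule leaving `u` on a cycle, so it survives the firing of `e`. -/
theorem ruleReachable_fire_of_not_onCycle [Fintype P] [Fintype R] {σ' : Config L V P}
    (hsrc : (ta.rule e).src ∈ σ.occupied)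
    (hflow : ∀ ℓ, (σ'.κ ℓ : ℤ) - ((ta.rule e).fire σ).κ ℓ =
      ta.inflow (y - Pi.single e 1) ℓ - ta.outflow (y - Pi.single e 1) ℓ)
    (hreach : ∀ r, 0 < y r → ta.RuleReachable {r | 0 < y r} σ.occupied r)
    (hcyc : ∀ e', 0 < y e' → (ta.rule e').src = (ta.rule e).src → ¬ ta.OnCycle y e')
    (hf : 0 < (y - Pi.single e 1 : R → ℕ) f) (hfe : (ta.rule f).src = (ta.rule e).src) :
    ta.RuleReachable {r | 0 < (y - Pi.single e 1 : R → ℕ) r} ((ta.rule e).fire σ).occupied f := by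
  set u := (ta.rule e).src
  by_cases hu : u ∈ ((ta.rule e).fire σ).occupied
  · exact .base hf (hfe ▸ hu)
  obtain ⟨g, hg, hgu⟩ : ∃ g, 0 < (y - Pi.single e 1 : R → ℕ) g ∧ (ta.rule g).dst = u := by
    refine ta.exists_pos_of_inflow_pos ?_
    have hout := ta.le_outflow (y - Pi.single e 1) (r := f)
    have hfu := hflow u
    simp only [Config.occupied, Set.mem_ofPred_eq, not_lt, Nat.le_zero] at hu
    rw [hfe] at hout
    rw [hu] at hfu
    omega
  rcases (hreach g (pos_of_pos_sub_single hg)).avoid_or_exit u with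
    hav | ⟨e', he', he'u, rfl | hex⟩
  · refine .step (hav.mono ?_ ((ta.rule e).diff_occupied_subset σ)) hf (hgu.trans hfe.symm)
    rintro r ⟨hr, hru⟩
    refine pos_sub_single_of_ne hr ?_
    rintro rfl
    exact hru rfl
  · exact absurd (Or.inl (hgu.trans he'u.symm)) (hcyc g he' he'u)
  · refine absurd (Or.inr ⟨g, hex.mono ?_ subset_rfl, hgu.trans he'u.symm⟩) (hcyc e' he' he'u)
    rintro r ⟨hr, hru⟩
    refine pos_sub_single_of_ne hr ?_
    rintro rfl
    exact hru he'u

end TA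

namespace TA

variable [Fintype P] [DecidableEq L] [Fintype R] {ta : TA L V P R} {σ σ' : Config L V P}
  {y : R → ℕ}

theorem eq_of_witnessesSteady_zero (hw : ta.witnessesSteady σ σ' 0) :
    σ = σ' := by
  obtain ⟨hp, -, hflow, hinc, -⟩ := hw
  obtain ⟨κ, g, p⟩ := σ
  obtain ⟨κ', g', p'⟩ := σ'
  simp only [Pi.zero_apply, Nat.cast_zero, ite_self, zero_mul, Finset.sum_const_zero,
    sub_zero, sub_eq_zero, Nat.cast_inj] at hp hflow hinc
  congr
  exacts [funext fun ℓ => (hflow ℓ).symm, funext fun z => (hinc z).symm]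

variable [DecidableEq R]

theorem exists_fire_ruleReachable
    (hflow : ∀ ℓ, (σ'.κ ℓ : ℤ) - σ.κ ℓ = ta.inflow y ℓ - ta.outflow y ℓ)
    (hreach : ∀ r, 0 < y r → ta.RuleReachable {r | 0 < y r} σ.occupied r) (hy : ∃ r, 0 < y r) :
    ∃ e, 0 < y e ∧ (ta.rule e).src ∈ σ.occupied ∧
      ∀ f, 0 < (y - Pi.single e 1 : R → ℕ) f → (ta.rule f).src = (ta.rule e).src →
        ta.RuleReachable {r | 0 < (y - Pi.single e 1 : R → ℕ) r}
          ((ta.rule e).fire σ).occupied f := by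
  obtain ⟨r₀, hr₀⟩ := hy
  obtain ⟨e, he, hsrc⟩ := (hreach r₀ hr₀).exists_src_mem
  by_cases hcyc : ∃ e', 0 < y e' ∧ (ta.rule e').src = (ta.rule e).src ∧ ta.OnCycle y e'
  · obtain ⟨e', he', heq, hcyc⟩ := hcyc
    rw [← heq] at hsrc
    exact ⟨e', he', hsrc, fun f hf hfe => ruleReachable_fire_of_onCycle hcyc hsrc hf hfe⟩
  · push Not at hcyc
    have hflow' : ∀ ℓ, (σ'.κ ℓ : ℤ) - ((ta.rule e).fire σ).κ ℓ =
        ta.inflow (y - Pi.single e 1) ℓ - ta.outflow (y - Pi.single e 1) ℓ := fun ℓ =>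
      (ta.fire_flow_iff σ' _ hsrc ℓ).mpr (by rw [sub_single_add_single he]; exact hflow ℓ)
    exact ⟨e, he, hsrc, fun f hf hfe =>
      ruleReachable_fire_of_not_onCycle hsrc hflow' hreach hcyc hf hfe⟩

theorem exists_fire_witnessesSteady (hw : ta.witnessesSteady σ σ' y) (hy : ∃ r, 0 < y r) :
    ∃ e y', y = y' + Pi.single e 1 ∧ (ta.rule e).enabledAt σ ∧
      ta.witnessesSteady ((ta.rule e).fire σ) σ' y' := by
  obtain ⟨hp, hctx, hflow, hinc, hguard, hchain⟩ := hw
  have hreach : ∀ r, 0 < y r → ta.RuleReachable {r | 0 < y r} σ.occupied r :=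
    fun r hr => chainTo_iff.mp (hchain r hr)
  obtain ⟨e, he, hsrc, hsame⟩ := exists_fire_ruleReachable hflow hreach hy
  set σ₁ := (ta.rule e).fire σ
  have hy' := (sub_single_add_single he).symm
  have hflow' : ∀ ℓ, (σ'.κ ℓ : ℤ) - σ₁.κ ℓ =
      ta.inflow (y - Pi.single e 1) ℓ - ta.outflow (y - Pi.single e 1) ℓ := fun ℓ =>
    (ta.fire_flow_iff σ' _ hsrc ℓ).mpr (hy' ▸ hflow ℓ)
  have hinc' : ∀ z, (σ'.g z : ℤ) - σ₁.g z = ta.increment (y - Pi.single e 1) z := fun z =>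
    (ta.fire_increment_iff σ σ' _ e z).mpr (hy' ▸ hinc z)
  have hle : σ₁.g ≤ σ'.g := fun z => by
    have := ta.increment_nonneg (y - Pi.single e 1) z
    have := hinc' z
    show σ₁.g z ≤ σ'.g z
    omega
  have hctx₁ : ta.context σ₁ = ta.context σ :=
    ((ta.context_subset_of_le (σ := σ₁) hp hle).trans_eq hctx.symm).antisymm
      (ta.context_subset_of_le (σ' := σ₁) rfl fun z => Nat.le_add_right _ _)
  refine ⟨e, _, hy', ⟨hsrc, hguard e he⟩, hp, hctx₁.trans hctx, hflow', hinc',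
    fun r hr φ hφ => ?_, fun f hf => ?_⟩
  · exact (ta.holds_iff_of_context_eq hctx₁ ⟨r, hφ⟩).mpr
      (hguard r (pos_of_pos_sub_single hr) φ hφ)
  · refine chainTo_iff.mpr (RuleReachable.fire hsrc (fun r hr => ?_) hsame
      (hreach f (pos_of_pos_sub_single hf)) hf)
    by_cases hre : r = e
    · exact Or.inl hre
    · exact Or.inr (pos_sub_single_of_ne hr hre)

theorem exists_schedule_of_witnessesSteady (hw : ta.witnessesSteady σ σ' y) :
    ∃ τ : List R, ta.applicable σ τ ∧ ta.steady σ τ ∧ ta.apply σ τ = σ' ∧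
      ∀ r, τ.count r = y r := by
  induction hn : ∑ r, y r generalizing σ y with
  | zero =>
    obtain rfl : y = 0 := funext fun r => Finset.sum_eq_zero_iff.mp hn r (Finset.mem_univ r)
    obtain rfl := eq_of_witnessesSteady_zero hw
    exact ⟨[], trivial, fun σ'' h => by rw [List.mem_singleton.mp h], rfl, fun _ => rfl⟩
  | succ n ih =>
    obtain ⟨r, -, hr⟩ := Finset.exists_ne_zero_of_sum_ne_zero (hn.trans_ne n.succ_ne_zero)
    obtain ⟨e, y', rfl, hen, hw'⟩ := exists_fire_witnessesSteady hw ⟨r, Nat.pos_of_ne_zero hr⟩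
    simp only [Pi.add_apply, Finset.sum_add_distrib, Finset.sum_pi_single', Finset.mem_univ,
      if_true, Nat.add_right_cancel_iff] at hn
    obtain ⟨τ, happ, hst, rfl, hcount⟩ := ih hw' hn
    refine ⟨e :: τ, ⟨hen, happ⟩, steady_cons ta (hw'.2.1.trans hw.2.1.symm) hst, rfl,
      fun r => ?_⟩
    rw [congrFun (List.count_cons_eq_add_single e τ) r, Pi.add_apply, Pi.add_apply, hcount]

end TA

theorem witness_observation_general [Fintype P] [DecidableEq L] [DecidableEq R] [Fintype R]
    (ta : TA L V P R) (σ σ' : Config L V P) :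
    (∀ τ : List R, ta.applicable σ τ → ta.steady σ τ → ta.apply σ τ = σ' →
      ta.witnessesSteady σ σ' (fun r => τ.count r)) ∧
    (∀ y : R → ℕ, ta.witnessesSteady σ σ' y →
      ∃ τ : List R, ta.applicable σ τ ∧ ta.steady σ τ ∧ ta.apply σ τ = σ' ∧
        ∀ r : R, τ.count r = y r) :=
  ⟨fun _ happ hst happly => happly ▸ ta.witnessesSteady_count happ hst,
    fun _ => TA.exists_schedule_of_witnessesSteady⟩

/-- (1) If `τ` is a steady schedule applicable to `σ` with `τ(σ) = σ'`, then the assignment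
sending each rule `r` to its number of occurrences in `τ` witnesses steady reachability from
`σ` to `σ'`.  (2) Conversely, if `y` witnesses steady reachability from `σ` to `σ'`, then
there is a steady schedule `τ` applicable to `σ` with `τ(σ) = σ'` in which every rule `r`
occurs exactly `y r` times. -/
theorem witness_observation [Fintype P] [DecidableEq L] [DecidableEq R] [Fintype L] [Fintype R]
    (ta : TA L V P R) (σ σ' : Config L V P)
    (hσ : ta.validConfig σ) (hσ' : ta.validConfig σ') :
    (∀ τ : List R, ta.applicable σ τ → ta.steady σ τ → ta.apply σ τ = σ' →
      ta.witnessesSteady σ σ' (fun r => τ.count r)) ∧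
    (∀ y : R → ℕ, ta.witnessesSteady σ σ' y →
      ∃ τ : List R, ta.applicable σ τ ∧ ta.steady σ τ ∧ ta.apply σ τ = σ' ∧
        ∀ r : R, τ.count r = y r) :=
  witness_observation_general ta σ σ'
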